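/- Let C₁, C₂ ⊆ 𝔽₂ⁿ be binary codes both containing the zero vector, and let C = {(u | u+v) : u ∈ C₁, v ∈ C₂} be their Plotkin construction. Then Ker(C) = {(x | x+y) : x ∈ Ker(C₁), y ∈ Ker(C₂)}, where Ker(D) = {x : D + x = D} denotes the kernel of a code D. -/

import Mathlib

def plotkin {n : ℕ} (C₁ C₂ : Set (Fin n → ZMod 2)) : Set (Fin (n + n) → ZMod 2) :=
  {w | ∃ u ∈ C₁, ∃ v ∈ C₂, w = Fin.append u (u + v)}

def ker {m : ℕ} (C : Set (Fin m → ZMod 2)) : Set (Fin m → ZMod 2) :=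
  {x | (x + ·) '' C = C}

/-!
The Plotkin map `(u, v) ↦ (u | u + v)` is an isomorphism of additive groups carrying
`C₁ × C₂` onto the Plotkin code, and the kernel of a code is its stabilizer under translation.
Stabilizers are transported by group isomorphisms, and the stabilizer of a product of two
nonempty sets is the product of their stabilizers, so the kernel of the Plotkin code is the
Plotkin code of the kernels.
-/

open Pointwise

namespace AddAction

variable {G H : Type*} [AddGroup G] [AddGroup H]

theorem coe_stabilizer_image_addEquiv (e : G ≃+ H) (s : Set G) :
    (stabilizer H (e '' s) : Set H) = e '' stabilizer G s := by
  ext y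
  obtain ⟨x, rfl⟩ := e.surjective y
  rw [e.injective.mem_set_image, SetLike.mem_coe, SetLike.mem_coe, mem_stabilizer_iff,
    mem_stabilizer_iff, ← Set.image_vadd_distrib, e.injective.image_injective.eq_iff]

theorem coe_stabilizer_prod {s : Set G} {t : Set H} (hs : s.Nonempty) (ht : t.Nonempty) :
    (stabilizer (G × H) (s ×ˢ t) : Set (G × H)) =
      (stabilizer G s : Set G) ×ˢ (stabilizer H t : Set H) := by
  ext ⟨a, b⟩
  have hst : ((a +ᵥ s) ×ˢ (b +ᵥ t)).Nonempty := (hs.vadd_set).prod ht.vadd_set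
  have hvadd : (a, b) +ᵥ s ×ˢ t = (a +ᵥ s) ×ˢ (b +ᵥ t) := Set.prodMap_image_prod _ _ s t
  simp only [SetLike.mem_coe, mem_stabilizer_iff, Set.mem_prod, hvadd,
    Set.prod_eq_prod_iff_of_nonempty hst]

end AddAction

theorem Fin.append_add {M : Type*} [Add M] {m n : ℕ} (a b : Fin m → M) (c d : Fin n → M) :
    Fin.append (a + b) (c + d) = Fin.append a c + Fin.append b d := by
  funext i
  refine Fin.addCases (fun i ↦ ?_) (fun i ↦ ?_) i <;> simp

def plotkinAddEquiv (M : Type*) [AddCommGroup M] (n : ℕ) :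
    (Fin n → M) × (Fin n → M) ≃+ (Fin (n + n) → M) where
  toFun p := Fin.append p.1 (p.1 + p.2)
  invFun w := (fun i ↦ w (Fin.castAdd n i), fun i ↦ w (Fin.natAdd n i) - w (Fin.castAdd n i))
  left_inv p := by
    ext <;> simp only [Fin.append_left, Fin.append_right, Pi.add_apply, add_sub_cancel_left]
  right_inv w := by
    convert Fin.append_castAdd_natAdd (f := w) using 2
    funext i
    simp
  map_add' p q := by
    simp only [Prod.fst_add, Prod.snd_add, add_add_add_comm, ← Fin.append_add]

theorem plotkin_eq_image {n : ℕ} (C₁ C₂ : Set (Fin n → ZMod 2)) :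
    plotkin C₁ C₂ = plotkinAddEquiv (ZMod 2) n '' (C₁ ×ˢ C₂) := by
  ext w
  simp [plotkin, plotkinAddEquiv, eq_comm, and_assoc]

theorem ker_eq_stabilizer {m : ℕ} (C : Set (Fin m → ZMod 2)) :
    ker C = AddAction.stabilizer (Fin m → ZMod 2) C :=
  rfl

theorem plotkin_ker {n : ℕ} (C₁ C₂ : Set (Fin n → ZMod 2))
    (h₁ : (0 : Fin n → ZMod 2) ∈ C₁) (h₂ : (0 : Fin n → ZMod 2) ∈ C₂) :
    ker (plotkin C₁ C₂) =
      {w | ∃ x ∈ ker C₁, ∃ y ∈ ker C₂, w = Fin.append x (x + y)} := by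
  change ker (plotkin C₁ C₂) = plotkin (ker C₁) (ker C₂)
  simp only [plotkin_eq_image, ker_eq_stabilizer, AddAction.coe_stabilizer_image_addEquiv,
    AddAction.coe_stabilizer_prod ⟨0, h₁⟩ ⟨0, h₂⟩]
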